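/- arXiv:1410.3079 — 2 statements merged into one kernel-verified Lean document; each statement's English description precedes it below -/
import Mathlib

section
/- Let A → B → C be non-expansive homomorphisms of seminormed commutative rings. In the first fundamental exact sequence Ω_{B/A} ⊗_B C →(g) Ω_{C/A} →(f) Ω_{C/B} → 0, the maps g and f are non-expansive, where Ω_{B/A} ⊗_B C carries the tensor seminorm (of the Kähler seminorm on Ω_{B/A} and the seminorm of C) and Ω_{C/A}, Ω_{C/B} carry their Kähler seminorms; moreover f is strictly admissible, i.e., the quotient seminorm on Ω_{C/B} induced by the surjection f from the Kähler seminorm of Ω_{C/A} equals the Kähler seminorm of Ω_{C/B}. -/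
/-! Every element of `Ω[C⁄A]` is a finite sum `∑ cᵢ • d bᵢ`, and `f` sends such a representation
to one of the same shape with the same bound; conversely every representation in `Ω[C⁄B]` lifts
verbatim to `Ω[C⁄A]`. This gives both the non-expansiveness and the strict admissibility of `f`.
For `g`, one has `g (m ⊗ w) = w • m'` with `m'` the image of `m` in `Ω[C⁄A]`. The Kähler seminorm
is non-archimedean on finite sums (concatenate near-optimal representations of the summands) and
satisfies `‖c • x‖ ≤ |c| ‖x‖`, so `‖g (∑ mᵢ ⊗ wᵢ)‖ ≤ maxᵢ ‖mᵢ‖ |wᵢ|`. -/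

open scoped NNReal TensorProduct

/-- A (nonarchimedean) seminorm on an additive group. -/
def IsGroupSeminorm {M : Type*} [AddCommGroup M] (f : M → ℝ≥0) : Prop :=
  f 0 = 0 ∧ ∀ x y : M, f (x - y) ≤ max (f x) (f y)

/-- A seminorm on a commutative ring. -/
def IsRingSeminorm {A : Type*} [CommRing A] (f : A → ℝ≥0) : Prop :=
  IsGroupSeminorm f ∧ f 1 = 1 ∧ ∀ x y : A, f (x * y) ≤ f x * f y

/-- The Kähler seminorm on `Ω[B⁄A]` induced by a seminorm `vB` on `B`. -/
noncomputable def kahlerSeminorm (A B : Type*) [CommRing A] [CommRing B] [Algebra A B]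
    (vB : B → ℝ≥0) (x : Ω[B⁄A]) : ℝ≥0 :=
  sInf { r | ∃ (n : ℕ) (c b : Fin n → B),
    x = ∑ i, c i • KaehlerDifferential.D A B (b i) ∧
    r = Finset.univ.sup fun i => vB (c i) * vB (b i) }

/-- The tensor seminorm on `M ⊗[A] N`. -/
noncomputable def tensorSeminorm (A M N : Type*) [CommRing A] [AddCommGroup M] [Module A M]
    [AddCommGroup N] [Module A N] (vM : M → ℝ≥0) (vN : N → ℝ≥0)
    (x : TensorProduct A M N) : ℝ≥0 :=
  sInf { r | ∃ (n : ℕ) (m : Fin n → M) (w : Fin n → N),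
    x = ∑ i, m i ⊗ₜ[A] w i ∧
    r = Finset.univ.sup fun i => vM (m i) * vN (w i) }

/-- The quotient seminorm induced by a (surjective) map `f : M → N` from a seminorm on `M`. -/
noncomputable def quotientSeminorm {M N : Type*} (f : M → N) (v : M → ℝ≥0) (y : N) : ℝ≥0 :=
  sInf { r | ∃ x : M, f x = y ∧ r = v x }

open KaehlerDifferential

theorem KaehlerDifferential.exists_eq_sum_smul_D {R A : Type*} [CommRing R] [CommRing A]
    [Algebra R A] (x : Ω[A⁄R]) :
    ∃ (n : ℕ) (c b : Fin n → A), x = ∑ i, c i • D R A (b i) := by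
  have hx : x ∈ Submodule.span A (Set.range (D R A)) := by
    rw [span_range_derivation]; trivial
  obtain ⟨n, c, d, hd⟩ := Submodule.mem_span_set'.mp hx
  refine ⟨n, c, fun i => (d i).2.choose, ?_⟩
  simp_rw [(d _).2.choose_spec]
  exact hd.symm

theorem KaehlerDifferential.map_sum_smul_D (R S A B : Type*) [CommRing R] [CommRing S]
    [CommRing A] [CommRing B] [Algebra R A] [Algebra A B] [Algebra S B] [Algebra R S]
    [Algebra R B] [IsScalarTower R A B] [IsScalarTower R S B] [SMulCommClass S A B]
    {ι : Type*} (s : Finset ι) (c b : ι → A) :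
    map R S A B (∑ i ∈ s, c i • D R A (b i)) = ∑ i ∈ s, c i • D S B (algebraMap A B (b i)) := by
  simp only [map_sum, map_smul, map_D]

section Kaehler

variable {R A : Type*} [CommRing R] [CommRing A] [Algebra R A] {vA : A → ℝ≥0}

theorem kahlerSeminorm_le_of_eq_sum {ι : Type*} [Fintype ι] {x : Ω[A⁄R]} {t : ℝ≥0}
    (c b : ι → A) (hx : x = ∑ i, c i • D R A (b i)) (ht : ∀ i, vA (c i) * vA (b i) ≤ t) :
    kahlerSeminorm R A vA x ≤ t := by
  let e := (Fintype.equivFin ι).symm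
  have hx' : x = ∑ j, c (e j) • D R A (b (e j)) := by
    rw [hx, Equiv.sum_comp e fun i => c i • D R A (b i)]
  refine (csInf_le (OrderBot.bddBelow _) ?_).trans (Finset.univ.sup_le fun j _ => ht (e j))
  exact ⟨_, _, _, hx', rfl⟩

theorem kahlerSeminorm_le_sup_of_eq_sum {ι : Type*} [Fintype ι] {x : Ω[A⁄R]} (c b : ι → A)
    (hx : x = ∑ i, c i • D R A (b i)) :
    kahlerSeminorm R A vA x ≤ Finset.univ.sup fun i => vA (c i) * vA (b i) :=
  kahlerSeminorm_le_of_eq_sum c b hx fun i => Finset.le_sup (f := fun i => vA (c i) * vA (b i))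
    (Finset.mem_univ i)

theorem le_kahlerSeminorm {x : Ω[A⁄R]} {t : ℝ≥0}
    (h : ∀ (n : ℕ) (c b : Fin n → A), x = ∑ i, c i • D R A (b i) →
      t ≤ Finset.univ.sup fun i => vA (c i) * vA (b i)) :
    t ≤ kahlerSeminorm R A vA x := by
  obtain ⟨n, c, b, hx⟩ := exists_eq_sum_smul_D x
  refine le_csInf ⟨_, n, c, b, hx, rfl⟩ ?_
  rintro _ ⟨n, c, b, hx, rfl⟩
  exact h n c b hx

theorem exists_eq_sum_lt_of_kahlerSeminorm_lt {x : Ω[A⁄R]} {t : ℝ≥0}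
    (h : kahlerSeminorm R A vA x < t) :
    ∃ (n : ℕ) (c b : Fin n → A), x = ∑ i, c i • D R A (b i) ∧ ∀ i, vA (c i) * vA (b i) < t := by
  obtain ⟨n, c, b, hx⟩ := exists_eq_sum_smul_D x
  obtain ⟨_, ⟨n, c, b, hx, rfl⟩, hlt⟩ := exists_lt_of_csInf_lt (by exact ⟨_, n, c, b, hx, rfl⟩) h
  exact ⟨n, c, b, hx, fun i => (Finset.le_sup (Finset.mem_univ i)).trans_lt hlt⟩

theorem kahlerSeminorm_sum_le {ι : Type*} [Fintype ι] (x : ι → Ω[A⁄R]) :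
    kahlerSeminorm R A vA (∑ i, x i) ≤ Finset.univ.sup fun i => kahlerSeminorm R A vA (x i) := by
  refine le_of_forall_gt_imp_ge_of_dense fun t ht => ?_
  have hlt i : kahlerSeminorm R A vA (x i) < t :=
    (Finset.le_sup (f := fun i => kahlerSeminorm R A vA (x i)) (Finset.mem_univ i)).trans_lt ht
  choose n c b hx hcb using fun i => exists_eq_sum_lt_of_kahlerSeminorm_lt (hlt i)
  refine kahlerSeminorm_le_of_eq_sum (fun p : Σ i, Fin (n i) => c p.1 p.2) (fun p => b p.1 p.2)
    ?_ fun p => (hcb p.1 p.2).le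
  rw [← Finset.univ_sigma_univ, Finset.sum_sigma]
  exact Finset.sum_congr rfl fun i _ => hx i

theorem kahlerSeminorm_smul_le (hmul : ∀ a a', vA (a * a') ≤ vA a * vA a') (a : A)
    (x : Ω[A⁄R]) : kahlerSeminorm R A vA (a • x) ≤ vA a * kahlerSeminorm R A vA x := by
  obtain ⟨n, c, b, hx⟩ := exists_eq_sum_smul_D x
  conv_rhs => rw [kahlerSeminorm, sInf_eq_iInf']
  have : Nonempty {r | ∃ (n : ℕ) (c b : Fin n → A), x = ∑ i, c i • D R A (b i) ∧
      r = Finset.univ.sup fun i => vA (c i) * vA (b i)} := ⟨⟨_, n, c, b, hx, rfl⟩⟩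
  refine NNReal.le_mul_iInf ?_
  rintro ⟨_, n, c, b, hx, rfl⟩
  refine kahlerSeminorm_le_of_eq_sum (fun i => a * c i) b ?_ fun i => ?_
  · simp_rw [hx, Finset.smul_sum, mul_smul]
  · calc vA (a * c i) * vA (b i) ≤ vA a * (vA (c i) * vA (b i)) := by
          rw [← mul_assoc]; exact mul_le_mul_left (hmul _ _) _
      _ ≤ _ := mul_le_mul_right (Finset.le_sup (f := fun i => vA (c i) * vA (b i))
          (Finset.mem_univ i)) _

end Kaehler

section Map

variable {R S A B : Type*} [CommRing R] [CommRing S] [CommRing A] [CommRing B] [Algebra R A]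
  [Algebra A B] [Algebra S B] [Algebra R S] [Algebra R B] [IsScalarTower R A B]
  [IsScalarTower R S B] [SMulCommClass S A B] {vA : A → ℝ≥0} {vB : B → ℝ≥0}

theorem kahlerSeminorm_map_le (h : ∀ a, vB (algebraMap A B a) ≤ vA a) (x : Ω[A⁄R]) :
    kahlerSeminorm S B vB (map R S A B x) ≤ kahlerSeminorm R A vA x :=
  le_kahlerSeminorm fun n c b hx => by
    refine (kahlerSeminorm_le_sup_of_eq_sum (fun i => algebraMap A B (c i))
      (fun i => algebraMap A B (b i)) ?_).trans (Finset.sup_mono_fun fun i _ => ?_)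
    · simp_rw [hx, map_sum_smul_D, algebraMap_smul]
    · exact mul_le_mul' (h _) (h _)

end Map

theorem quotientSeminorm_le {M N : Type*} {f : M → N} (v : M → ℝ≥0) {x : M} {y : N}
    (hx : f x = y) : quotientSeminorm f v y ≤ v x :=
  csInf_le (OrderBot.bddBelow _) ⟨x, hx, rfl⟩

theorem le_quotientSeminorm {M N : Type*} {f : M → N} {v : M → ℝ≥0} {w : N → ℝ≥0}
    (hf : Function.Surjective f) (h : ∀ x, w (f x) ≤ v x) (y : N) :
    w y ≤ quotientSeminorm f v y := by
  obtain ⟨x, rfl⟩ := hf y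
  refine le_csInf ⟨_, x, rfl, rfl⟩ ?_
  rintro _ ⟨x', hx', rfl⟩
  exact hx' ▸ h x'

theorem quotientSeminorm_map_eq_kahlerSeminorm {R S B : Type*} [CommRing R] [CommRing S]
    [CommRing B] [Algebra R S] [Algebra S B] [Algebra R B] [IsScalarTower R S B]
    (vB : B → ℝ≥0) (y : Ω[B⁄S]) :
    quotientSeminorm (map R S B B) (kahlerSeminorm R B vB) y = kahlerSeminorm S B vB y := by
  refine le_antisymm (le_kahlerSeminorm fun n c b hy => ?_)
    (le_quotientSeminorm (map_surjective R S B) (kahlerSeminorm_map_le fun _ => le_rfl) y)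
  have hlift : map R S B B (∑ i, c i • D R B (b i)) = y := by
    rw [map_sum_smul_D, hy]; rfl
  exact (quotientSeminorm_le _ hlift).trans (kahlerSeminorm_le_sup_of_eq_sum c b rfl)

theorem le_tensorSeminorm {R M N : Type*} [CommRing R] [AddCommGroup M] [Module R M]
    [AddCommGroup N] [Module R N] {vM : M → ℝ≥0} {vN : N → ℝ≥0} {x : M ⊗[R] N} {t : ℝ≥0}
    (h : ∀ (n : ℕ) (m : Fin n → M) (w : Fin n → N), x = ∑ i, m i ⊗ₜ[R] w i →
      t ≤ Finset.univ.sup fun i => vM (m i) * vN (w i)) :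
    t ≤ tensorSeminorm R M N vM vN x := by
  obtain ⟨s, hs⟩ := TensorProduct.exists_finset x
  let e := s.equivFin.symm
  have hx : x = ∑ j, (e j).1.1 ⊗ₜ[R] (e j).1.2 := by
    rw [hs, ← Finset.sum_coe_sort s, Equiv.sum_comp e fun p : s => p.1.1 ⊗ₜ[R] p.1.2]
  refine le_csInf ⟨_, _, _, _, hx, rfl⟩ ?_
  rintro _ ⟨n, m, w, hx, rfl⟩
  exact h n m w hx

section FirstFundamentalSequence

variable {A B C : Type*} [CommRing A] [CommRing B] [CommRing C] [Algebra A B] [Algebra A C]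
  [Algebra B C] [IsScalarTower A B C] {g : Ω[B⁄A] ⊗[B] C →+ Ω[C⁄A]}

theorem apply_tmul_eq_smul_map (hg : ∀ (b' b : B) (c : C), g ((b' • D A B b) ⊗ₜ[B] c)
      = (c * algebraMap B C b') • D A C (algebraMap B C b)) (m : Ω[B⁄A]) (w : C) :
    g (m ⊗ₜ w) = w • map A A B C m := by
  obtain ⟨n, c, b, rfl⟩ := exists_eq_sum_smul_D m
  rw [TensorProduct.sum_tmul, map_sum, map_sum_smul_D, Finset.smul_sum]
  refine Finset.sum_congr rfl fun i _ => ?_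
  rw [hg, mul_smul, algebraMap_smul]

theorem kahlerSeminorm_apply_le_tensorSeminorm {vB : B → ℝ≥0} {vC : C → ℝ≥0}
    (hmul : ∀ c c', vC (c * c') ≤ vC c * vC c') (hBC : ∀ b, vC (algebraMap B C b) ≤ vB b)
    (hg : ∀ (b' b : B) (c : C), g ((b' • D A B b) ⊗ₜ[B] c)
      = (c * algebraMap B C b') • D A C (algebraMap B C b)) (x : Ω[B⁄A] ⊗[B] C) :
    kahlerSeminorm A C vC (g x) ≤ tensorSeminorm B (Ω[B⁄A]) C (kahlerSeminorm A B vB) vC x :=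
  le_tensorSeminorm fun n m w hx => by
    rw [hx, map_sum]
    refine (kahlerSeminorm_sum_le _).trans (Finset.sup_mono_fun fun i _ => ?_)
    rw [apply_tmul_eq_smul_map hg, mul_comm]
    exact (kahlerSeminorm_smul_le hmul _ _).trans
      (mul_le_mul_right (kahlerSeminorm_map_le hBC _) _)

end FirstFundamentalSequence

theorem first_fundamental_sequence_nonexpansive_strictly_admissible_general
    {A B C : Type*} [CommRing A] [CommRing B] [CommRing C]
    [Algebra A B] [Algebra A C] [Algebra B C] [IsScalarTower A B C]
    (vB : B → ℝ≥0) (vC : C → ℝ≥0)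
    (hC : IsRingSeminorm vC)
    (hBC : ∀ b : B, vC (algebraMap B C b) ≤ vB b)
    (g : TensorProduct B (Ω[B⁄A]) C →+ Ω[C⁄A])
    (hg : ∀ (b' b : B) (c : C),
      g ((b' • KaehlerDifferential.D A B b) ⊗ₜ[B] c)
        = (c * algebraMap B C b') • KaehlerDifferential.D A C (algebraMap B C b)) :
    (∀ x, kahlerSeminorm A C vC (g x)
        ≤ tensorSeminorm B (Ω[B⁄A]) C (kahlerSeminorm A B vB) vC x) ∧
    (∀ x : Ω[C⁄A],
        kahlerSeminorm B C vC (KaehlerDifferential.map A B C C x) ≤ kahlerSeminorm A C vC x) ∧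
    (∀ y : Ω[C⁄B],
        quotientSeminorm (KaehlerDifferential.map A B C C) (kahlerSeminorm A C vC) y
          = kahlerSeminorm B C vC y) :=
  ⟨kahlerSeminorm_apply_le_tensorSeminorm hC.2.2 hBC hg,
    kahlerSeminorm_map_le fun _ => le_rfl,
    quotientSeminorm_map_eq_kahlerSeminorm vC⟩

/-- First fundamental sequence for non-expansive homomorphisms `A → B → C` of seminormed rings:
in `Ω_{B/A} ⊗_B C →(g) Ω_{C/A} →(f) Ω_{C/B} → 0`, the maps `g` (characterized by
`g((b' • d b) ⊗ c) = (c * b') • d b` in `Ω_{C/A}`) and `f = KaehlerDifferential.map` are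
non-expansive, and `f` is strictly admissible: the quotient seminorm induced by `f` from the
Kähler seminorm of `Ω_{C/A}` equals the Kähler seminorm of `Ω_{C/B}`. -/
theorem first_fundamental_sequence_nonexpansive_strictly_admissible
    {A B C : Type*} [CommRing A] [CommRing B] [CommRing C]
    [Algebra A B] [Algebra A C] [Algebra B C] [IsScalarTower A B C]
    (vA : A → ℝ≥0) (vB : B → ℝ≥0) (vC : C → ℝ≥0)
    (hA : IsRingSeminorm vA) (hB : IsRingSeminorm vB) (hC : IsRingSeminorm vC)
    (hAB : ∀ a : A, vB (algebraMap A B a) ≤ vA a)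
    (hBC : ∀ b : B, vC (algebraMap B C b) ≤ vB b)
    (g : TensorProduct B (Ω[B⁄A]) C →+ Ω[C⁄A])
    (hg : ∀ (b' b : B) (c : C),
      g ((b' • KaehlerDifferential.D A B b) ⊗ₜ[B] c)
        = (c * algebraMap B C b') • KaehlerDifferential.D A C (algebraMap B C b)) :
    (∀ x, kahlerSeminorm A C vC (g x)
        ≤ tensorSeminorm B (Ω[B⁄A]) C (kahlerSeminorm A B vB) vC x) ∧
    (∀ x : Ω[C⁄A],
        kahlerSeminorm B C vC (KaehlerDifferential.map A B C C x) ≤ kahlerSeminorm A C vC x) ∧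
    (∀ y : Ω[C⁄B],
        quotientSeminorm (KaehlerDifferential.map A B C C) (kahlerSeminorm A C vC) y
          = kahlerSeminorm B C vC y) :=
  first_fundamental_sequence_nonexpansive_strictly_admissible_general vB vC hC hBC g hg
end

section
/- Let A → B and A → A' be non-expansive homomorphisms of seminormed commutative rings, and let B' = B ⊗_A A' carry the tensor seminorm. Then the canonical base-change isomorphism Ω_{B/A} ⊗_B B' → Ω_{B'/A'} is an isometric isomorphism, where the source carries the tensor seminorm of the Kähler seminorm on Ω_{B/A} and the seminorm of B', and the target carries the Kähler seminorm of B' over A'. -/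
open scoped NNReal TensorProduct

attribute [local instance] Algebra.TensorProduct.rightAlgebra

/-! Both seminorms are instances of one construction: on an additive group generated by elements
`φ p` with weights `w p`, the infimum over finite representations `x = ∑ φ (p i)` of
`max (w (p i))`. It is nonarchimedean, and an additive map into a nonarchimedean seminormed group
is bounded by `c` times it as soon as it is bounded by `c * w p` on each generator.
So it suffices to bound `Φ` and `Φ⁻¹` on generators: `Φ (c • d b ⊗ y) = (y (c ⊗ 1)) • d (b ⊗ 1)`
has norm at most `|c| |b| ‖y‖`, and, since `d (b ⊗ a) = (1 ⊗ a) • d (b ⊗ 1)`,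
`Φ⁻¹ (c' • d (b ⊗ a)) = d b ⊗ c' (1 ⊗ a)` has norm at most `|b| |a| ‖c'‖`. -/

open Finset

theorem IsNonarchimedean.apply_sum_le_sup_of_apply_zero {M ι : Type*} [AddCommMonoid M]
    {f : M → ℝ≥0} (hf : IsNonarchimedean f) (hf0 : f 0 = 0) (s : Finset ι) (x : ι → M) :
    f (∑ i ∈ s, x i) ≤ s.sup fun i => f (x i) := by
  rcases s.eq_empty_or_nonempty with rfl | hs
  · simp [hf0]
  · rw [← sup'_eq_sup hs]
    exact hf.apply_sum_le_sup hs

theorem NNReal.le_mul_sInf {a c : ℝ≥0} {S : Set ℝ≥0} (hS : S.Nonempty) (h : ∀ s ∈ S, a ≤ c * s) :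
    a ≤ c * sInf S := by
  have := hS.to_subtype
  rw [sInf_eq_iInf']
  exact NNReal.le_mul_iInf fun s => h s s.2

section SpanSeminorm

variable {P M : Type*} [AddCommMonoid M] (φ : P → M) (w : P → ℝ≥0)

/-- When the `φ p` generate `M`, this is the largest nonarchimedean seminorm on `M` bounded by
`w p` at each `φ p`. -/
noncomputable def spanSeminorm (x : M) : ℝ≥0 :=
  sInf { r | ∃ (n : ℕ) (p : Fin n → P), x = ∑ i, φ (p i) ∧ r = univ.sup fun i => w (p i) }

variable {φ w}

theorem spanSeminorm_sum_le {ι : Type*} [Fintype ι] (p : ι → P) :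
    spanSeminorm φ w (∑ i, φ (p i)) ≤ univ.sup fun i => w (p i) := by
  let e := (Fintype.equivFin ι).symm
  calc spanSeminorm φ w (∑ i, φ (p i))
      ≤ univ.sup fun i => w (p (e i)) :=
        csInf_le (OrderBot.bddBelow _) ⟨_, p ∘ e, (e.sum_comp fun i => φ (p i)).symm, rfl⟩
    _ ≤ univ.sup fun i => w (p i) :=
        Finset.sup_le fun i _ => le_sup (f := fun i => w (p i)) (mem_univ _)

theorem spanSeminorm_apply_le (p : P) : spanSeminorm φ w (φ p) ≤ w p := by
  simpa using spanSeminorm_sum_le (φ := φ) (w := w) fun _ : Unit => p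

theorem spanSeminorm_zero : spanSeminorm φ w 0 = 0 :=
  le_antisymm (by simpa using spanSeminorm_sum_le (φ := φ) (w := w) (Empty.elim : Empty → P))
    zero_le

theorem AddSubmonoid.exists_fin_sum_eq_of_closure_range_eq_top
    (hφ : AddSubmonoid.closure (Set.range φ) = ⊤) (x : M) :
    ∃ (n : ℕ) (p : Fin n → P), x = ∑ i, φ (p i) := by
  induction (hφ ▸ AddSubmonoid.mem_top x : x ∈ AddSubmonoid.closure (Set.range φ))
    using AddSubmonoid.closure_induction with
  | mem _ hx =>
    obtain ⟨p, rfl⟩ := hx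
    exact ⟨1, fun _ => p, by simp⟩
  | zero => exact ⟨0, Fin.elim0, by simp⟩
  | add _ _ _ _ hx hy =>
    obtain ⟨n, p, rfl⟩ := hx
    obtain ⟨m, q, rfl⟩ := hy
    exact ⟨n + m, Fin.append p q, by simp [Fin.sum_univ_add]⟩

theorem exists_eq_sum_sup_lt_of_spanSeminorm_lt (hφ : AddSubmonoid.closure (Set.range φ) = ⊤)
    {x : M} {c : ℝ≥0} (hx : spanSeminorm φ w x < c) :
    ∃ (n : ℕ) (p : Fin n → P), x = ∑ i, φ (p i) ∧ (univ.sup fun i => w (p i)) < c := by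
  obtain ⟨n, p, hp⟩ := AddSubmonoid.exists_fin_sum_eq_of_closure_range_eq_top hφ x
  obtain ⟨_, ⟨n, p, hp, rfl⟩, hlt⟩ := exists_lt_of_csInf_lt (by exact ⟨_, n, p, hp, rfl⟩) hx
  exact ⟨n, p, hp, hlt⟩

theorem isNonarchimedean_spanSeminorm (hφ : AddSubmonoid.closure (Set.range φ) = ⊤) :
    IsNonarchimedean (spanSeminorm φ w) := by
  intro x y
  refine le_of_forall_gt_imp_ge_of_dense fun c hc => ?_
  obtain ⟨n, p, rfl, hp⟩ := exists_eq_sum_sup_lt_of_spanSeminorm_lt hφ (le_sup_left.trans_lt hc)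
  obtain ⟨m, q, rfl, hq⟩ := exists_eq_sum_sup_lt_of_spanSeminorm_lt hφ (le_sup_right.trans_lt hc)
  have hc0 : ⊥ < c := bot_le.trans_lt hc
  calc spanSeminorm φ w (∑ i, φ (p i) + ∑ i, φ (q i))
      = spanSeminorm φ w (∑ i, φ (Sum.elim p q i)) := by simp [Fintype.sum_sum_type]
    _ ≤ univ.sup fun i => w (Sum.elim p q i) := spanSeminorm_sum_le _
    _ ≤ c := by
      refine ((Finset.sup_lt_iff hc0).2 fun i _ => ?_).le
      rcases i with i | i
      · exact (Finset.sup_lt_iff hc0).1 hp i (mem_univ i)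
      · exact (Finset.sup_lt_iff hc0).1 hq i (mem_univ i)

theorem apply_le_mul_spanSeminorm (hφ : AddSubmonoid.closure (Set.range φ) = ⊤)
    {N : Type*} [AddCommMonoid N] {ν : N → ℝ≥0} (hν : IsNonarchimedean ν) (hν0 : ν 0 = 0)
    (f : M →+ N) (c : ℝ≥0) (hf : ∀ p, ν (f (φ p)) ≤ c * w p) (x : M) :
    ν (f x) ≤ c * spanSeminorm φ w x := by
  obtain ⟨n, p, hp⟩ := AddSubmonoid.exists_fin_sum_eq_of_closure_range_eq_top hφ x
  refine NNReal.le_mul_sInf ⟨_, n, p, hp, rfl⟩ ?_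
  rintro _ ⟨n, p, rfl, rfl⟩
  calc ν (f (∑ i, φ (p i))) ≤ univ.sup fun i => ν (f (φ (p i))) := by
        rw [map_sum]; exact hν.apply_sum_le_sup_of_apply_zero hν0 _ _
    _ ≤ c * univ.sup fun i => w (p i) :=
        Finset.sup_le fun i _ => (hf (p i)).trans <|
          mul_le_mul_right (le_sup (f := fun i => w (p i)) (mem_univ i)) c

end SpanSeminorm

theorem kahlerSeminorm_eq_spanSeminorm (A B : Type*) [CommRing A] [CommRing B] [Algebra A B]
    (vB : B → ℝ≥0) :
    kahlerSeminorm A B vB = spanSeminorm (fun p : B × B => p.1 • KaehlerDifferential.D A B p.2)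
      (fun p => vB p.1 * vB p.2) := by
  funext x
  refine congrArg sInf (Set.ext fun r => ⟨?_, ?_⟩)
  · rintro ⟨n, c, b, hx, hr⟩
    exact ⟨n, fun i => (c i, b i), hx, hr⟩
  · rintro ⟨n, p, hx, hr⟩
    exact ⟨n, fun i => (p i).1, fun i => (p i).2, hx, hr⟩

theorem tensorSeminorm_eq_spanSeminorm (A M N : Type*) [CommRing A] [AddCommGroup M] [Module A M]
    [AddCommGroup N] [Module A N] (vM : M → ℝ≥0) (vN : N → ℝ≥0) :
    tensorSeminorm A M N vM vN = spanSeminorm (fun p : M × N => p.1 ⊗ₜ[A] p.2)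
      (fun p => vM p.1 * vN p.2) := by
  funext x
  refine congrArg sInf (Set.ext fun r => ⟨?_, ?_⟩)
  · rintro ⟨n, m, w, hx, hr⟩
    exact ⟨n, fun i => (m i, w i), hx, hr⟩
  · rintro ⟨n, p, hx, hr⟩
    exact ⟨n, fun i => (p i).1, fun i => (p i).2, hx, hr⟩

theorem KaehlerDifferential.closure_range_smul_D_eq_top (A B : Type*) [CommRing A] [CommRing B]
    [Algebra A B] :
    AddSubmonoid.closure (Set.range fun p : B × B => p.1 • KaehlerDifferential.D A B p.2) = ⊤ := by
  have h := congrArg Submodule.toAddSubmonoid (KaehlerDifferential.span_range_derivation A B)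
  rw [Submodule.span_eq_closure, Submodule.top_toAddSubmonoid] at h
  convert h using 2
  ext
  simp [Set.mem_smul]

theorem TensorProduct.closure_range_tmul_eq_top (A M N : Type*) [CommRing A] [AddCommGroup M]
    [Module A M] [AddCommGroup N] [Module A N] :
    AddSubmonoid.closure (Set.range fun p : M × N => p.1 ⊗ₜ[A] p.2) = ⊤ := by
  refine (AddSubmonoid.eq_top_iff' _).2 fun x => ?_
  induction x using TensorProduct.induction_on with
  | zero => exact zero_mem _
  | tmul m n => exact AddSubmonoid.subset_closure ⟨(m, n), rfl⟩
  | add x y hx hy => exact add_mem hx hy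

section KaehlerSeminorm

variable {A B : Type*} [CommRing A] [CommRing B] [Algebra A B] (vB : B → ℝ≥0)

theorem isNonarchimedean_kahlerSeminorm : IsNonarchimedean (kahlerSeminorm A B vB) := by
  rw [kahlerSeminorm_eq_spanSeminorm]
  exact isNonarchimedean_spanSeminorm (KaehlerDifferential.closure_range_smul_D_eq_top A B)

theorem kahlerSeminorm_zero : kahlerSeminorm A B vB 0 = 0 := by
  rw [kahlerSeminorm_eq_spanSeminorm]
  exact spanSeminorm_zero

theorem kahlerSeminorm_smul_D_le (c b : B) :
    kahlerSeminorm A B vB (c • KaehlerDifferential.D A B b) ≤ vB c * vB b := by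
  rw [kahlerSeminorm_eq_spanSeminorm]
  exact spanSeminorm_apply_le (c, b)

theorem apply_le_mul_kahlerSeminorm {N : Type*} [AddCommMonoid N] {ν : N → ℝ≥0}
    (hν : IsNonarchimedean ν) (hν0 : ν 0 = 0) (f : Ω[B⁄A] →+ N) (c : ℝ≥0)
    (hf : ∀ a b, ν (f (a • KaehlerDifferential.D A B b)) ≤ c * (vB a * vB b)) (x : Ω[B⁄A]) :
    ν (f x) ≤ c * kahlerSeminorm A B vB x := by
  rw [kahlerSeminorm_eq_spanSeminorm]
  exact apply_le_mul_spanSeminorm (KaehlerDifferential.closure_range_smul_D_eq_top A B) hν hν0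
    f c (fun p => hf p.1 p.2) x

end KaehlerSeminorm

section TensorSeminorm

variable {A M N : Type*} [CommRing A] [AddCommGroup M] [Module A M] [AddCommGroup N] [Module A N]
  (vM : M → ℝ≥0) (vN : N → ℝ≥0)

theorem isNonarchimedean_tensorSeminorm : IsNonarchimedean (tensorSeminorm A M N vM vN) := by
  rw [tensorSeminorm_eq_spanSeminorm]
  exact isNonarchimedean_spanSeminorm (TensorProduct.closure_range_tmul_eq_top A M N)

theorem tensorSeminorm_zero : tensorSeminorm A M N vM vN 0 = 0 := by
  rw [tensorSeminorm_eq_spanSeminorm]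
  exact spanSeminorm_zero

theorem tensorSeminorm_tmul_le (m : M) (n : N) :
    tensorSeminorm A M N vM vN (m ⊗ₜ n) ≤ vM m * vN n := by
  rw [tensorSeminorm_eq_spanSeminorm]
  exact spanSeminorm_apply_le (m, n)

theorem apply_le_mul_tensorSeminorm {L : Type*} [AddCommMonoid L] {ν : L → ℝ≥0}
    (hν : IsNonarchimedean ν) (hν0 : ν 0 = 0) (f : M ⊗[A] N →+ L) (c : ℝ≥0)
    (hf : ∀ m n, ν (f (m ⊗ₜ n)) ≤ c * (vM m * vN n)) (x : M ⊗[A] N) :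
    ν (f x) ≤ c * tensorSeminorm A M N vM vN x := by
  rw [tensorSeminorm_eq_spanSeminorm]
  exact apply_le_mul_spanSeminorm (TensorProduct.closure_range_tmul_eq_top A M N) hν hν0
    f c (fun p => hf p.1 p.2) x

end TensorSeminorm

theorem tensorSeminorm_mul_tmul_le {A R S : Type*} [CommRing A] [CommRing R] [CommRing S]
    [Algebra A R] [Algebra A S] {vR : R → ℝ≥0} {vS : S → ℝ≥0}
    (hvR : ∀ x y, vR (x * y) ≤ vR x * vR y) (hvS : ∀ x y, vS (x * y) ≤ vS x * vS y)
    (y : R ⊗[A] S) (r : R) (s : S) :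
    tensorSeminorm A R S vR vS (y * r ⊗ₜ s) ≤ vR r * vS s * tensorSeminorm A R S vR vS y := by
  refine apply_le_mul_tensorSeminorm vR vS (isNonarchimedean_tensorSeminorm vR vS)
    (tensorSeminorm_zero vR vS) (AddMonoidHom.mulRight (r ⊗ₜ s)) _ (fun m n => ?_) y
  rw [AddMonoidHom.mulRight_apply, Algebra.TensorProduct.tmul_mul_tmul]
  calc tensorSeminorm A R S vR vS ((m * r) ⊗ₜ (n * s))
      ≤ vR (m * r) * vS (n * s) := tensorSeminorm_tmul_le vR vS _ _
    _ ≤ (vR m * vR r) * (vS n * vS s) := mul_le_mul' (hvR m r) (hvS n s)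
    _ = vR r * vS s * (vR m * vS n) := by ring

theorem KaehlerDifferential.D_tmul_eq_smul_D_tmul_one {A B A' : Type*} [CommRing A] [CommRing B]
    [CommRing A'] [Algebra A B] [Algebra A A'] (b : B) (a : A') :
    KaehlerDifferential.D A' (B ⊗[A] A') (b ⊗ₜ a)
      = ((1 : B) ⊗ₜ[A] a) • KaehlerDifferential.D A' (B ⊗[A] A') (b ⊗ₜ 1) := by
  have h : b ⊗ₜ[A] a = (b ⊗ₜ[A] (1 : A')) * algebraMap A' (B ⊗[A] A') a := by
    rw [Algebra.TensorProduct.right_algebraMap_apply, Algebra.TensorProduct.tmul_mul_tmul,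
      mul_one, one_mul]
  rw [h, Derivation.leibniz, Derivation.map_algebraMap, smul_zero, zero_add,
    Algebra.TensorProduct.right_algebraMap_apply]

section BaseChange

variable {A B A' : Type*} [CommRing A] [CommRing B] [CommRing A'] [Algebra A B] [Algebra A A']
  {vB : B → ℝ≥0} {vA' : A' → ℝ≥0}
  (Φ : (Ω[B⁄A]) ⊗[B] (B ⊗[A] A') ≃+ Ω[(B ⊗[A] A')⁄A'])

theorem kahlerSeminorm_apply_tmul_le (hBm : ∀ x y, vB (x * y) ≤ vB x * vB y) (hA'1 : vA' 1 = 1)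
    (hA'm : ∀ x y, vA' (x * y) ≤ vA' x * vA' y)
    (hΦ : ∀ (c b : B) (x : B ⊗[A] A'), Φ ((c • KaehlerDifferential.D A B b) ⊗ₜ[B] x)
      = (x * (c ⊗ₜ[A] (1 : A'))) • KaehlerDifferential.D A' (B ⊗[A] A') (b ⊗ₜ[A] (1 : A')))
    (ω : Ω[B⁄A]) (y : B ⊗[A] A') :
    kahlerSeminorm A' (B ⊗[A] A') (tensorSeminorm A B A' vB vA') (Φ (ω ⊗ₜ y))
      ≤ kahlerSeminorm A B vB ω * tensorSeminorm A B A' vB vA' y := by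
  rw [mul_comm]
  refine apply_le_mul_kahlerSeminorm vB (isNonarchimedean_kahlerSeminorm _)
    (kahlerSeminorm_zero _) (Φ.toAddMonoidHom.comp ((TensorProduct.mk B (Ω[B⁄A]) (B ⊗[A] A')).flip y).toAddMonoidHom)
    _ (fun c b => ?_) ω
  change kahlerSeminorm _ _ _ (Φ ((c • KaehlerDifferential.D A B b) ⊗ₜ y)) ≤ _
  rw [hΦ]
  calc _ ≤ tensorSeminorm A B A' vB vA' (y * c ⊗ₜ 1) * tensorSeminorm A B A' vB vA' (b ⊗ₜ 1) :=
        kahlerSeminorm_smul_D_le _ _ _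
    _ ≤ (vB c * vA' 1 * tensorSeminorm A B A' vB vA' y) * (vB b * vA' 1) :=
        mul_le_mul' (tensorSeminorm_mul_tmul_le hBm hA'm y c 1) (tensorSeminorm_tmul_le vB vA' b 1)
    _ = tensorSeminorm A B A' vB vA' y * (vB c * vB b) := by rw [hA'1]; ring

theorem tensorSeminorm_symm_apply_smul_D_le (hB1 : vB 1 = 1)
    (hBm : ∀ x y, vB (x * y) ≤ vB x * vB y) (hA'm : ∀ x y, vA' (x * y) ≤ vA' x * vA' y)
    (hΦ : ∀ (c b : B) (x : B ⊗[A] A'), Φ ((c • KaehlerDifferential.D A B b) ⊗ₜ[B] x)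
      = (x * (c ⊗ₜ[A] (1 : A'))) • KaehlerDifferential.D A' (B ⊗[A] A') (b ⊗ₜ[A] (1 : A')))
    (c y : B ⊗[A] A') :
    tensorSeminorm B (Ω[B⁄A]) (B ⊗[A] A') (kahlerSeminorm A B vB) (tensorSeminorm A B A' vB vA')
        (Φ.symm (c • KaehlerDifferential.D A' (B ⊗[A] A') y))
      ≤ tensorSeminorm A B A' vB vA' c * tensorSeminorm A B A' vB vA' y := by
  refine apply_le_mul_tensorSeminorm vB vA' (isNonarchimedean_tensorSeminorm _ _)
    (tensorSeminorm_zero _ _) (Φ.symm.toAddMonoidHom.comp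
      ((DistribSMul.toAddMonoidHom _ c).comp (KaehlerDifferential.D A' (B ⊗[A] A')).toAddMonoidHom))
    _ (fun b a => ?_) y
  have hsymm : Φ.symm (c • KaehlerDifferential.D A' (B ⊗[A] A') (b ⊗ₜ a))
      = KaehlerDifferential.D A B b ⊗ₜ (c * (1 : B) ⊗ₜ[A] a) := by
    rw [KaehlerDifferential.D_tmul_eq_smul_D_tmul_one, smul_smul, AddEquiv.symm_apply_eq,
      ← one_smul B (KaehlerDifferential.D A B b), hΦ, ← Algebra.TensorProduct.one_def, mul_one]
  change tensorSeminorm _ _ _ _ _ (Φ.symm (c • KaehlerDifferential.D A' (B ⊗[A] A') (b ⊗ₜ a))) ≤ _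
  rw [hsymm]
  calc _ ≤ kahlerSeminorm A B vB (KaehlerDifferential.D A B b)
          * tensorSeminorm A B A' vB vA' (c * (1 : B) ⊗ₜ[A] a) := tensorSeminorm_tmul_le _ _ _ _
    _ ≤ (vB 1 * vB b) * (vB 1 * vA' a * tensorSeminorm A B A' vB vA' c) :=
        mul_le_mul' (by simpa using kahlerSeminorm_smul_D_le (A := A) vB 1 b)
          (tensorSeminorm_mul_tmul_le hBm hA'm c 1 a)
    _ = tensorSeminorm A B A' vB vA' c * (vB b * vA' a) := by rw [hB1]; ring

end BaseChange

theorem kahlerSeminorm_base_change_isometry_general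
    {A B A' : Type*} [CommRing A] [CommRing B] [CommRing A']
    [Algebra A B] [Algebra A A']
    (vB : B → ℝ≥0) (vA' : A' → ℝ≥0)
    (hB : IsRingSeminorm vB) (hA' : IsRingSeminorm vA')
    (Φ : TensorProduct B (Ω[B⁄A]) (TensorProduct A B A') ≃+ Ω[(TensorProduct A B A')⁄A'])
    (hΦ : ∀ (c b : B) (x : TensorProduct A B A'),
      Φ ((c • KaehlerDifferential.D A B b) ⊗ₜ[B] x)
        = (x * (c ⊗ₜ[A] (1 : A'))) •
            KaehlerDifferential.D A' (TensorProduct A B A') (b ⊗ₜ[A] (1 : A'))) :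
    ∀ x : TensorProduct B (Ω[B⁄A]) (TensorProduct A B A'),
      kahlerSeminorm A' (TensorProduct A B A') (tensorSeminorm A B A' vB vA') (Φ x)
        = tensorSeminorm B (Ω[B⁄A]) (TensorProduct A B A')
            (kahlerSeminorm A B vB) (tensorSeminorm A B A' vB vA') x := by
  obtain ⟨-, hB1, hBm⟩ := hB
  obtain ⟨-, hA'1, hA'm⟩ := hA'
  intro x
  apply le_antisymm
  · simpa using apply_le_mul_tensorSeminorm _ _ (isNonarchimedean_kahlerSeminorm _)
      (kahlerSeminorm_zero _) Φ.toAddMonoidHom 1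
      (fun ω y => by simpa using kahlerSeminorm_apply_tmul_le Φ hBm hA'1 hA'm hΦ ω y) x
  · simpa using apply_le_mul_kahlerSeminorm _ (isNonarchimedean_tensorSeminorm _ _)
      (tensorSeminorm_zero _ _) Φ.symm.toAddMonoidHom 1
      (fun c y => by simpa using tensorSeminorm_symm_apply_smul_D_le Φ hB1 hBm hA'm hΦ c y) (Φ x)

/-- Base change of Kähler seminorms: given non-expansive homomorphisms `A → B`, `A → A'` of
seminormed rings and `B' = B ⊗_A A'` with the tensor seminorm, the canonical base-change
isomorphism `Ω_{B/A} ⊗_B B' ≅ Ω_{B'/A'}` (characterized by `(c • d b) ⊗ x ↦ (x * (c ⊗ 1)) •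
d (b ⊗ 1)`) is an isometric isomorphism for the tensor seminorm on the source (of the Kähler
seminorm of `Ω_{B/A}` and the tensor seminorm of `B'`) and the Kähler seminorm on the target. -/
theorem kahlerSeminorm_base_change_isometry
    {A B A' : Type*} [CommRing A] [CommRing B] [CommRing A']
    [Algebra A B] [Algebra A A']
    (vA : A → ℝ≥0) (vB : B → ℝ≥0) (vA' : A' → ℝ≥0)
    (hA : IsRingSeminorm vA) (hB : IsRingSeminorm vB) (hA' : IsRingSeminorm vA')
    (hAB : ∀ a : A, vB (algebraMap A B a) ≤ vA a)
    (hAA' : ∀ a : A, vA' (algebraMap A A' a) ≤ vA a)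
    (Φ : TensorProduct B (Ω[B⁄A]) (TensorProduct A B A') ≃+ Ω[(TensorProduct A B A')⁄A'])
    (hΦ : ∀ (c b : B) (x : TensorProduct A B A'),
      Φ ((c • KaehlerDifferential.D A B b) ⊗ₜ[B] x)
        = (x * (c ⊗ₜ[A] (1 : A'))) •
            KaehlerDifferential.D A' (TensorProduct A B A') (b ⊗ₜ[A] (1 : A'))) :
    ∀ x : TensorProduct B (Ω[B⁄A]) (TensorProduct A B A'),
      kahlerSeminorm A' (TensorProduct A B A') (tensorSeminorm A B A' vB vA') (Φ x)
        = tensorSeminorm B (Ω[B⁄A]) (TensorProduct A B A')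
            (kahlerSeminorm A B vB) (tensorSeminorm A B A' vB vA') x :=
  kahlerSeminorm_base_change_isometry_general vB vA' hB hA' Φ hΦ
end
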